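/- arXiv:2505.06229 — 2 statements merged into one kernel-verified Lean document; each statement's English description precedes it below -/
import Mathlib

section
/- Under the hypotheses of the Read–Bajraktarević operator setup (T a contraction on the complete metric space X with factor |α|∞ = max_i |α_i| < 1), T admits a unique fixed point φ^α ∈ X, which satisfies the self-referential equation φ^α(x) = F_i(L_i⁻¹(x), φ^α(L_i⁻¹(x))) for all x ∈ [x_{i-1}, x_i] and all i, and interpolates the data: φ^α(x_i) = y_i for all i = 0, 1, …, N. -/
/-!
On the `i`-th piece `[x (i-1), x i]` the Read–Bajraktarević operator is
`(T f)(s) = F_i(L_i⁻¹ s, f(L_i⁻¹ s))`. For `f ∈ X` the join conditions `F_i(x₀, y₀) = y_{i-1}`,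
`F_i(x_N, y_N) = y_i` make the pieces agree at the shared nodes, where they take the value `y_i`;
so `T f` is well defined, continuous, and again in `X`. Each `F_i` being `|α_i|`-Lipschitz in its
second variable makes `T` a `κ`-contraction for the sup metric, and Banach's fixed point theorem
on the complete space `X` yields `φ^α`. Evaluating `φ^α = T φ^α` at a node gives `φ^α(x_j) = y_j`.
-/

open Set

section Partition

variable {n : ℕ} {x : Fin (n + 2) → ℝ}

theorem Monotone.Icc_castSucc_succ_subset (hx : Monotone x) (i : Fin (n + 1)) :
    Icc (x i.castSucc) (x i.succ) ⊆ Icc (x 0) (x (Fin.last _)) :=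
  Icc_subset_Icc (hx (Fin.zero_le _)) (hx (Fin.le_last _))

theorem Monotone.iUnion_Icc_castSucc_succ (hx : Monotone x) :
    ⋃ i : Fin (n + 1), Icc (x i.castSucc) (x i.succ) = Icc (x 0) (x (Fin.last _)) := by
  refine Subset.antisymm (iUnion_subset hx.Icc_castSucc_succ_subset) ?_
  induction n with
  | zero => exact fun s hs => mem_iUnion.2 ⟨0, hs⟩
  | succ n ih =>
    rintro s ⟨h0, hlast⟩
    by_cases hs : s ≤ x (Fin.last (n + 1)).castSucc
    · obtain ⟨i, hi⟩ := mem_iUnion.1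
        (ih (x := x ∘ Fin.castSucc) (hx.comp Fin.strictMono_castSucc.monotone) ⟨h0, hs⟩)
      refine mem_iUnion.2 ⟨i.castSucc, ?_⟩
      simpa only [Function.comp_apply, Fin.succ_castSucc] using hi
    · exact mem_iUnion.2 ⟨Fin.last _, (not_le.1 hs).le, hlast⟩

theorem StrictMono.succ_eq_castSucc_of_mem_Icc (hx : StrictMono x) {i j : Fin (n + 1)}
    (hij : i < j) {s : ℝ} (hi : s ∈ Icc (x i.castSucc) (x i.succ))
    (hj : s ∈ Icc (x j.castSucc) (x j.succ)) : s = x i.succ ∧ i.succ = j.castSucc := by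
  have hnode : x i.succ ≤ x j.castSucc := hx.monotone (Fin.succ_le_castSucc_iff.2 hij)
  have hs : s = x i.succ := le_antisymm hi.2 (hnode.trans hj.1)
  exact ⟨hs, hx.injective (le_antisymm hnode (hs ▸ hj.1))⟩

open Classical in
/-- An index `i` with `s ∈ [x i, x (i + 1)]`; the junk value `0` if `s` lies in no piece. -/
noncomputable def pieceIndex (x : Fin (n + 2) → ℝ) (s : ℝ) : Fin (n + 1) :=
  if h : ∃ i : Fin (n + 1), s ∈ Icc (x i.castSucc) (x i.succ) then h.choose else 0

theorem mem_Icc_pieceIndex (hx : Monotone x) {s : ℝ} (hs : s ∈ Icc (x 0) (x (Fin.last _))) :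
    s ∈ Icc (x (pieceIndex x s).castSucc) (x (pieceIndex x s).succ) := by
  have h : ∃ i : Fin (n + 1), s ∈ Icc (x i.castSucc) (x i.succ) :=
    mem_iUnion.1 (hx.iUnion_Icc_castSucc_succ.symm ▸ hs)
  rw [pieceIndex, dif_pos h]
  exact h.choose_spec

noncomputable def glue (x : Fin (n + 2) → ℝ) (g : Fin (n + 1) → ℝ → ℝ) (s : ℝ) : ℝ :=
  g (pieceIndex x s) s

variable {g : Fin (n + 1) → ℝ → ℝ} {y : Fin (n + 2) → ℝ}

theorem glue_eq_of_mem (hx : StrictMono x) (hleft : ∀ i, g i (x i.castSucc) = y i.castSucc)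
    (hright : ∀ i, g i (x i.succ) = y i.succ) {i : Fin (n + 1)} {s : ℝ}
    (hs : s ∈ Icc (x i.castSucc) (x i.succ)) : glue x g s = g i s := by
  have hagree : ∀ {j k}, j < k → s ∈ Icc (x j.castSucc) (x j.succ) →
      s ∈ Icc (x k.castSucc) (x k.succ) → g j s = g k s := fun hjk hj hk => by
    obtain ⟨rfl, hnode⟩ := hx.succ_eq_castSucc_of_mem_Icc hjk hj hk
    rw [hright, hnode]
    exact (hleft _).symm
  have hj := mem_Icc_pieceIndex hx.monotone (hx.monotone.Icc_castSucc_succ_subset i hs)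
  rcases lt_trichotomy (pieceIndex x s) i with hlt | heq | hgt
  · exact hagree hlt hj hs
  · rw [glue, heq]
  · exact (hagree hgt hs hj).symm

theorem glue_apply_node (hx : StrictMono x) (hleft : ∀ i, g i (x i.castSucc) = y i.castSucc)
    (hright : ∀ i, g i (x i.succ) = y i.succ) (j : Fin (n + 2)) : glue x g (x j) = y j := by
  have hpiece : ∀ i : Fin (n + 1), x i.castSucc ≤ x i.succ := fun i =>
    hx.monotone Fin.castSucc_lt_succ.le
  induction j using Fin.cases with
  | zero =>
    exact (glue_eq_of_mem hx hleft hright (i := 0) ⟨le_rfl, hpiece 0⟩).trans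
      (by simpa only [Fin.castSucc_zero] using hleft 0)
  | succ i => rw [glue_eq_of_mem hx hleft hright ⟨hpiece i, le_rfl⟩, hright]

theorem continuousOn_glue (hx : StrictMono x) (hleft : ∀ i, g i (x i.castSucc) = y i.castSucc)
    (hright : ∀ i, g i (x i.succ) = y i.succ)
    (hg : ∀ i, ContinuousOn (g i) (Icc (x i.castSucc) (x i.succ))) :
    ContinuousOn (glue x g) (Icc (x 0) (x (Fin.last _))) := by
  rw [← hx.monotone.iUnion_Icc_castSucc_succ]
  refine (locallyFinite_of_finite _).continuousOn_iUnion (fun _ => isClosed_Icc) fun i => ?_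
  exact (hg i).congr fun s hs => glue_eq_of_mem hx hleft hright hs

end Partition

section ReadBajraktarevic

variable {n : ℕ} {x y : Fin (n + 2) → ℝ} {Linv : Fin (n + 1) → ℝ → ℝ}
  {F : Fin (n + 1) → ℝ → ℝ → ℝ} {a b : ℝ} {f : ℝ → ℝ}

/-- The Read–Bajraktarević operator. -/
noncomputable def rbOperator (x : Fin (n + 2) → ℝ) (Linv : Fin (n + 1) → ℝ → ℝ)
    (F : Fin (n + 1) → ℝ → ℝ → ℝ) (f : ℝ → ℝ) : ℝ → ℝ :=
  glue x fun i s => F i (Linv i s) (f (Linv i s))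

theorem rbOperator_eq_of_mem (hx : StrictMono x) (hLinva : ∀ i, Linv i (x i.castSucc) = a)
    (hLinvb : ∀ i, Linv i (x i.succ) = b) (hFa : ∀ i, F i a (y 0) = y i.castSucc)
    (hFb : ∀ i, F i b (y (Fin.last _)) = y i.succ) (hfa : f a = y 0)
    (hfb : f b = y (Fin.last _)) {i : Fin (n + 1)} {s : ℝ}
    (hs : s ∈ Icc (x i.castSucc) (x i.succ)) :
    rbOperator x Linv F f s = F i (Linv i s) (f (Linv i s)) :=
  glue_eq_of_mem hx (fun i => by rw [hLinva, hfa, hFa]) (fun i => by rw [hLinvb, hfb, hFb]) hs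

theorem rbOperator_apply_node (hx : StrictMono x) (hLinva : ∀ i, Linv i (x i.castSucc) = a)
    (hLinvb : ∀ i, Linv i (x i.succ) = b) (hFa : ∀ i, F i a (y 0) = y i.castSucc)
    (hFb : ∀ i, F i b (y (Fin.last _)) = y i.succ) (hfa : f a = y 0)
    (hfb : f b = y (Fin.last _)) (j : Fin (n + 2)) : rbOperator x Linv F f (x j) = y j :=
  glue_apply_node hx (fun i => by rw [hLinva, hfa, hFa]) (fun i => by rw [hLinvb, hfb, hFb]) j

theorem continuousOn_rbOperator (hx : StrictMono x) (hLinva : ∀ i, Linv i (x i.castSucc) = a)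
    (hLinvb : ∀ i, Linv i (x i.succ) = b) (hFa : ∀ i, F i a (y 0) = y i.castSucc)
    (hFb : ∀ i, F i b (y (Fin.last _)) = y i.succ) (hfa : f a = y 0)
    (hfb : f b = y (Fin.last _))
    (hLinvcont : ∀ i, ContinuousOn (Linv i) (Icc (x i.castSucc) (x i.succ)))
    (hLinvmaps : ∀ i, MapsTo (Linv i) (Icc (x i.castSucc) (x i.succ)) (Icc a b))
    (hFcont : ∀ i, ContinuousOn (fun p : ℝ × ℝ => F i p.1 p.2) (Icc a b ×ˢ univ))
    (hf : ContinuousOn f (Icc a b)) :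
    ContinuousOn (rbOperator x Linv F f) (Icc (x 0) (x (Fin.last _))) := by
  refine continuousOn_glue hx (fun i => by rw [hLinva, hfa, hFa])
    (fun i => by rw [hLinvb, hfb, hFb]) fun i => ?_
  exact (hFcont i).comp ((hLinvcont i).prodMk (hf.comp (hLinvcont i) (hLinvmaps i)))
    fun s hs => ⟨hLinvmaps i hs, mem_univ _⟩

theorem dist_rbOperator_le (hx : Monotone x)
    (hLinvmaps : ∀ i, MapsTo (Linv i) (Icc (x i.castSucc) (x i.succ)) (Icc a b))
    {α : Fin (n + 1) → ℝ} {κ : ℝ} (hα : ∀ i, |α i| ≤ κ)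
    (hFlip : ∀ i (u v w : ℝ), |F i u v - F i u w| ≤ |α i| * |v - w|) {g : ℝ → ℝ} {C : ℝ}
    (hfg : ∀ u ∈ Icc a b, dist (f u) (g u) ≤ C) {s : ℝ} (hs : s ∈ Icc (x 0) (x (Fin.last _))) :
    dist (rbOperator x Linv F f s) (rbOperator x Linv F g s) ≤ κ * C := by
  set i := pieceIndex x s
  have hu : Linv i s ∈ Icc a b := hLinvmaps i (mem_Icc_pieceIndex hx hs)
  calc |F i (Linv i s) (f (Linv i s)) - F i (Linv i s) (g (Linv i s))|
      ≤ |α i| * |f (Linv i s) - g (Linv i s)| := hFlip _ _ _ _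
    _ ≤ κ * C := mul_le_mul (hα i) (hfg _ hu) (abs_nonneg _) ((abs_nonneg _).trans (hα i))

theorem rbOperator_eqOn_self_of_forall (hx : Monotone x)
    (hf : ∀ i, ∀ s ∈ Icc (x i.castSucc) (x i.succ), f s = F i (Linv i s) (f (Linv i s))) :
    EqOn (rbOperator x Linv F f) f (Icc (x 0) (x (Fin.last _))) := fun s hs =>
  (hf _ s (mem_Icc_pieceIndex hx hs)).symm

end ReadBajraktarevic

section FixedPoint

variable {a b ya yb : ℝ}

/-- The space `X` of the Read–Bajraktarević setup, with `x₀ = a`, `x_N = b`, `y₀ = ya`,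
`y_N = yb`. -/
def pinnedMaps (hab : a ≤ b) (ya yb : ℝ) : Set C(Icc a b, ℝ) :=
  {f | f ⟨a, left_mem_Icc.2 hab⟩ = ya ∧ f ⟨b, right_mem_Icc.2 hab⟩ = yb}

theorem isClosed_pinnedMaps (hab : a ≤ b) : IsClosed (pinnedMaps hab ya yb) :=
  (isClosed_eq (continuous_eval_const _) continuous_const).inter
    (isClosed_eq (continuous_eval_const _) continuous_const)

theorem pinnedMaps_nonempty (hab : a < b) : (pinnedMaps hab.le ya yb).Nonempty := by
  refine ⟨⟨fun t => ya + (t - a) / (b - a) * (yb - ya), by fun_prop⟩, ?_, ?_⟩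
  · simp
  · simp [div_self (sub_ne_zero.2 hab.ne')]

theorem exists_eqOn_fixedPoint_of_contractingOn_Icc (hab : a < b) {K : NNReal} (hK : K < 1)
    {T : (ℝ → ℝ) → ℝ → ℝ}
    (hT : ∀ f, ContinuousOn f (Icc a b) → f a = ya → f b = yb →
      ContinuousOn (T f) (Icc a b) ∧ T f a = ya ∧ T f b = yb)
    (hdist : ∀ f g C, (∀ u ∈ Icc a b, dist (f u) (g u) ≤ C) →
      ∀ s ∈ Icc a b, dist (T f s) (T g s) ≤ K * C) :
    ∃ φ, (ContinuousOn φ (Icc a b) ∧ φ a = ya ∧ φ b = yb) ∧ EqOn (T φ) φ (Icc a b) ∧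
      ∀ ψ, (ContinuousOn ψ (Icc a b) ∧ ψ a = ya ∧ ψ b = yb) → EqOn (T ψ) ψ (Icc a b) →
        EqOn ψ φ (Icc a b) := by
  set X := pinnedMaps hab.le ya yb
  have : CompleteSpace X := (isClosed_pinnedMaps hab.le).isComplete.completeSpace_coe
  have : Nonempty X := (pinnedMaps_nonempty hab).to_subtype
  have hext : ∀ f : X, ContinuousOn (IccExtend hab.le f.1) (Icc a b) ∧
      IccExtend hab.le f.1 a = ya ∧ IccExtend hab.le f.1 b = yb := fun f =>
    ⟨f.1.continuous.Icc_extend'.continuousOn, (IccExtend_left _ _).trans f.2.1,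
      (IccExtend_right _ _).trans f.2.2⟩
  let restrictX (g : ℝ → ℝ) (hg : ContinuousOn g (Icc a b) ∧ g a = ya ∧ g b = yb) : X :=
    ⟨⟨(Icc a b).domRestrict g, hg.1.domRestrict⟩, hg.2⟩
  let Φ : X → X := fun f =>
    restrictX (T (IccExtend hab.le f.1)) (hT _ (hext f).1 (hext f).2.1 (hext f).2.2)
  have hΦ : ContractingWith K Φ := by
    refine ⟨hK, LipschitzWith.of_dist_le_mul fun f g => ?_⟩
    rw [Subtype.dist_eq, Subtype.dist_eq]
    exact (ContinuousMap.dist_le (by positivity)).2 fun p =>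
      hdist _ _ _ (fun u _ => ContinuousMap.dist_apply_le_dist _) p p.2
  set φ := ContractingWith.fixedPoint Φ hΦ
  refine ⟨IccExtend hab.le φ.1, hext φ, fun s hs => ?_, fun ψ hψ hTψ => ?_⟩
  · rw [IccExtend_of_mem _ _ hs]
    exact congrArg (fun f : X => f.1 ⟨s, hs⟩) (ContractingWith.fixedPoint_isFixedPt (f := Φ) hΦ)
  · have hfix : Φ (restrictX ψ hψ) = restrictX ψ hψ := by
      refine Subtype.ext (ContinuousMap.ext fun p => ?_)
      -- `T` sees its argument only on `[a, b]`: this is `hdist` with `C = 0`.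
      have hTeq : T (IccExtend hab.le (restrictX ψ hψ).1) p = T ψ p := by
        refine dist_le_zero.1 ?_
        simpa only [mul_zero] using hdist (IccExtend hab.le (restrictX ψ hψ).1) ψ 0
          (fun u hu => by rw [IccExtend_of_mem _ _ hu]; exact (dist_self (ψ u)).le) p p.2
      exact hTeq.trans (hTψ p.2)
    intro s hs
    rw [IccExtend_of_mem _ _ hs]
    exact congrArg (fun f : X => f.1 ⟨s, hs⟩) (hΦ.fixedPoint_unique hfix)

end FixedPoint

theorem stmt_5_general (a b : ℝ) (hab : a < b) (N : ℕ)
    (x : Fin (N + 2) → ℝ) (hxmono : StrictMono x)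
    (hx0 : x 0 = a) (hxN : x (Fin.last (N + 1)) = b)
    (y : Fin (N + 2) → ℝ)
    (L : Fin (N + 1) → ℝ → ℝ) (Linv : Fin (N + 1) → ℝ → ℝ)
    (hLa : ∀ i, L i a = x i.castSucc) (hLb : ∀ i, L i b = x i.succ)
    (hLinvcont : ∀ i, ContinuousOn (Linv i) (Set.Icc (x i.castSucc) (x i.succ)))
    (hLinvmaps : ∀ i, Set.MapsTo (Linv i) (Set.Icc (x i.castSucc) (x i.succ)) (Set.Icc a b))
    (hLinvL : ∀ i, ∀ t ∈ Set.Icc a b, Linv i (L i t) = t)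
    (F : Fin (N + 1) → ℝ → ℝ → ℝ)
    (hFcont : ∀ i, ContinuousOn (fun p : ℝ × ℝ => F i p.1 p.2)
      (Set.Icc a b ×ˢ (Set.univ : Set ℝ)))
    (α : Fin (N + 1) → ℝ) (κ : ℝ) (hκ : κ < 1) (hα : ∀ i, |α i| ≤ κ)
    (hFlip : ∀ i (u v w : ℝ), |F i u v - F i u w| ≤ |α i| * |v - w|)
    (hFa : ∀ i, F i a (y 0) = y i.castSucc)
    (hFb : ∀ i, F i b (y (Fin.last (N + 1))) = y i.succ) :
    ∃ φα : ℝ → ℝ,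
      (ContinuousOn φα (Set.Icc a b) ∧ φα a = y 0 ∧ φα b = y (Fin.last (N + 1))) ∧
      (∀ i : Fin (N + 1), ∀ s ∈ Set.Icc (x i.castSucc) (x i.succ),
        φα s = F i (Linv i s) (φα (Linv i s))) ∧
      (∀ j : Fin (N + 2), φα (x j) = y j) ∧
      (∀ ψ : ℝ → ℝ,
        (ContinuousOn ψ (Set.Icc a b) ∧ ψ a = y 0 ∧ ψ b = y (Fin.last (N + 1))) →
        (∀ i : Fin (N + 1), ∀ s ∈ Set.Icc (x i.castSucc) (x i.succ),
          ψ s = F i (Linv i s) (ψ (Linv i s))) →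
        Set.EqOn ψ φα (Set.Icc a b)) := by
  have hLinva : ∀ i, Linv i (x i.castSucc) = a := fun i =>
    hLa i ▸ hLinvL i a (left_mem_Icc.2 hab.le)
  have hLinvb : ∀ i, Linv i (x i.succ) = b := fun i =>
    hLb i ▸ hLinvL i b (right_mem_Icc.2 hab.le)
  subst hx0 hxN
  obtain ⟨φ, hφ, hφT, hφunique⟩ := exists_eqOn_fixedPoint_of_contractingOn_Icc hab
    (K := ⟨κ, (abs_nonneg _).trans (hα 0)⟩) hκ (T := rbOperator x Linv F)
    (fun f hf hfa hfb =>
      ⟨continuousOn_rbOperator hxmono hLinva hLinvb hFa hFb hfa hfb hLinvcont hLinvmaps hFcont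
          hf,
        rbOperator_apply_node hxmono hLinva hLinvb hFa hFb hfa hfb 0,
        rbOperator_apply_node hxmono hLinva hLinvb hFa hFb hfa hfb (Fin.last _)⟩)
    (fun _ _ _ hfg _ hs => dist_rbOperator_le hxmono.monotone hLinvmaps hα hFlip hfg hs)
  refine ⟨φ, hφ, fun i s hs => ?_, fun j => ?_, fun ψ hψ hψself =>
    hφunique ψ hψ (rbOperator_eqOn_self_of_forall hxmono.monotone hψself)⟩
  · rw [← hφT (hxmono.monotone.Icc_castSucc_succ_subset i hs)]
    exact rbOperator_eq_of_mem hxmono hLinva hLinvb hFa hFb hφ.2.1 hφ.2.2 hs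
  · rw [← hφT ⟨hxmono.monotone (Fin.zero_le _), hxmono.monotone (Fin.le_last _)⟩]
    exact rbOperator_apply_node hxmono hLinva hLinvb hFa hFb hφ.2.1 hφ.2.2 j

/-- The RB operator admits a unique fixed point `φα` in `X`, which satisfies the
self-referential equation and interpolates the data `(x j, y j)`. -/
theorem stmt_5 (a b : ℝ) (hab : a < b) (N : ℕ)
    (x : Fin (N + 2) → ℝ) (hxmono : StrictMono x)
    (hx0 : x 0 = a) (hxN : x (Fin.last (N + 1)) = b)
    (y : Fin (N + 2) → ℝ)
    (L : Fin (N + 1) → ℝ → ℝ) (Linv : Fin (N + 1) → ℝ → ℝ)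
    (hLcont : ∀ i, ContinuousOn (L i) (Set.Icc a b))
    (hLmaps : ∀ i, Set.MapsTo (L i) (Set.Icc a b) (Set.Icc (x i.castSucc) (x i.succ)))
    (hLa : ∀ i, L i a = x i.castSucc) (hLb : ∀ i, L i b = x i.succ)
    (hLinvcont : ∀ i, ContinuousOn (Linv i) (Set.Icc (x i.castSucc) (x i.succ)))
    (hLinvmaps : ∀ i, Set.MapsTo (Linv i) (Set.Icc (x i.castSucc) (x i.succ)) (Set.Icc a b))
    (hLinvL : ∀ i, ∀ t ∈ Set.Icc a b, Linv i (L i t) = t)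
    (hLLinv : ∀ i, ∀ s ∈ Set.Icc (x i.castSucc) (x i.succ), L i (Linv i s) = s)
    (F : Fin (N + 1) → ℝ → ℝ → ℝ)
    (hFcont : ∀ i, ContinuousOn (fun p : ℝ × ℝ => F i p.1 p.2)
      (Set.Icc a b ×ˢ (Set.univ : Set ℝ)))
    (α : Fin (N + 1) → ℝ) (κ : ℝ) (hκ : κ < 1) (hα : ∀ i, |α i| ≤ κ)
    (hFlip : ∀ i (u v w : ℝ), |F i u v - F i u w| ≤ |α i| * |v - w|)
    (hFa : ∀ i, F i a (y 0) = y i.castSucc)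
    (hFb : ∀ i, F i b (y (Fin.last (N + 1))) = y i.succ) :
    ∃ φα : ℝ → ℝ,
      (ContinuousOn φα (Set.Icc a b) ∧ φα a = y 0 ∧ φα b = y (Fin.last (N + 1))) ∧
      (∀ i : Fin (N + 1), ∀ s ∈ Set.Icc (x i.castSucc) (x i.succ),
        φα s = F i (Linv i s) (φα (Linv i s))) ∧
      (∀ j : Fin (N + 2), φα (x j) = y j) ∧
      (∀ ψ : ℝ → ℝ,
        (ContinuousOn ψ (Set.Icc a b) ∧ ψ a = y 0 ∧ ψ b = y (Fin.last (N + 1))) →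
        (∀ i : Fin (N + 1), ∀ s ∈ Set.Icc (x i.castSucc) (x i.succ),
          ψ s = F i (Linv i s) (ψ (Linv i s))) →
        Set.EqOn ψ φα (Set.Icc a b)) :=
  stmt_5_general a b hab N x hxmono hx0 hxN y L Linv hLa hLb hLinvcont hLinvmaps hLinvL F hFcont α κ
    hκ hα hFlip hFa hFb
end

section
/- Let f ∈ C[a,b] and for each n let f_n^α be the neural network α-fractal function satisfying f_n^α(x) = α_i f_n^α(L_i⁻¹(x)) + f(x) - α_i S_{n,σ}(f, L_i⁻¹(x)) on [x_{i-1}, x_i], with |α|∞ < 1. Then ‖f_n^α - f‖∞ ≤ (|α|∞/(1-|α|∞)) ω(f, (b-a)/n); in particular, f_n^α → f uniformly as n → ∞. -/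
open Filter

/-- Modulus of continuity of `f` on `[a,b]` with parameter `δ`. -/
noncomputable def modulus (f : ℝ → ℝ) (a b δ : ℝ) : ℝ :=
  sSup {d : ℝ | ∃ u ∈ Set.Icc a b, ∃ v ∈ Set.Icc a b, |u - v| ≤ δ ∧ d = |f u - f v|}

/-- The neural network operator `S_{n,σ}(f,·)` with nodes `a_k = a + k (b-a)/n`. -/
noncomputable def nnOp (m : ℝ) (ξ : ℝ → ℝ) (f : ℝ → ℝ) (a b : ℝ) (n : ℕ) (t : ℝ) : ℝ :=
  ∑ k ∈ Finset.range (n + 1),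
    f (a + k * ((b - a) / n)) * ξ (2 * m / ((b - a) / n) * (t - (a + k * ((b - a) / n))))

open Topology Set Finset

/-!
The neural network operator is a quasi-interpolant: its weights
`σ (y + m) - σ (y - m)` telescope to a partition of unity and vanish at nodes farther than
`(b - a) / n` from the evaluation point, so `|S_{n,σ} f - f| ≤ ω(f, (b - a) / n)`.
Writing `e = f_n^α - f`, the self-referential equation gives on `[x_{i-1}, x_i]`
`e = α_i (e ∘ L_i⁻¹ + f ∘ L_i⁻¹ - S_{n,σ}(f, L_i⁻¹ ·))`, so at a maximum point of `|e|`
one gets `‖e‖ ≤ |α|∞ (‖e‖ + ω)`, i.e. `‖e‖ ≤ |α|∞ / (1 - |α|∞) ω`,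
and `ω(f, (b - a) / n) → 0`.
-/

section Modulus

variable {f : ℝ → ℝ} {a b : ℝ}

lemma modulus_nonneg (δ : ℝ) : 0 ≤ modulus f a b δ :=
  Real.sSup_nonneg <| by rintro _ ⟨u, -, v, -, -, rfl⟩; exact abs_nonneg _

lemma abs_sub_le_modulus (hf : ContinuousOn f (Icc a b)) {u v δ : ℝ} (hu : u ∈ Icc a b)
    (hv : v ∈ Icc a b) (huv : |u - v| ≤ δ) : |f u - f v| ≤ modulus f a b δ := by
  obtain ⟨C, hC⟩ := isCompact_Icc.exists_bound_of_continuousOn hf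
  refine le_csSup ⟨C + C, ?_⟩ ⟨u, hu, v, hv, huv, rfl⟩
  rintro _ ⟨u', hu', v', hv', -, rfl⟩
  exact (abs_sub _ _).trans (add_le_add (hC u' hu') (hC v' hv'))

lemma modulus_le {δ ε : ℝ} (hε : 0 ≤ ε)
    (h : ∀ u ∈ Icc a b, ∀ v ∈ Icc a b, |u - v| ≤ δ → |f u - f v| ≤ ε) :
    modulus f a b δ ≤ ε :=
  Real.sSup_le (by rintro _ ⟨u, hu, v, hv, huv, rfl⟩; exact h u hu v hv huv) hε

lemma tendsto_modulus_zero (hf : UniformContinuousOn f (Icc a b)) :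
    Tendsto (modulus f a b) (𝓝 0) (𝓝 0) := by
  rw [Metric.tendsto_nhds_nhds]
  intro ε hε
  obtain ⟨δ, hδ, hfδ⟩ := Metric.uniformContinuousOn_iff.1 hf (ε / 2) (half_pos hε)
  refine ⟨δ, hδ, fun t ht => ?_⟩
  rw [Real.dist_0_eq_abs] at ht
  rw [Real.dist_0_eq_abs, abs_of_nonneg (modulus_nonneg t)]
  refine (modulus_le (half_pos hε).le fun u hu v hv huv => ?_).trans_lt (half_lt_self hε)
  refine (hfδ u hu v hv ?_).le
  rw [Real.dist_eq]
  linarith [le_abs_self t]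

lemma tendsto_modulus_div_atTop (hf : ContinuousOn f (Icc a b)) (c : ℝ) :
    Tendsto (fun n : ℕ => modulus f a b (c / n)) atTop (𝓝 0) :=
  (tendsto_modulus_zero (isCompact_Icc.uniformContinuousOn_of_continuous hf)).comp
    (tendsto_const_div_atTop_nhds_zero_nat c)

lemma abs_sum_mul_sub_le_modulus {ι : Type*} {s : Finset ι} {p w : ι → ℝ} {t δ : ℝ}
    (hf : ContinuousOn f (Icc a b)) (ht : t ∈ Icc a b) (hp : ∀ k ∈ s, p k ∈ Icc a b)
    (hw0 : ∀ k ∈ s, 0 ≤ w k) (hw1 : ∑ k ∈ s, w k = 1)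
    (hwloc : ∀ k ∈ s, δ < |p k - t| → w k = 0) :
    |∑ k ∈ s, f (p k) * w k - f t| ≤ modulus f a b δ := calc
  _ = |∑ k ∈ s, (f (p k) - f t) * w k| := by
    simp only [sub_mul, sum_sub_distrib, ← mul_sum, hw1, mul_one]
  _ ≤ ∑ k ∈ s, |f (p k) - f t| * w k :=
    (abs_sum_le_sum_abs _ _).trans_eq <|
      sum_congr rfl fun k hk => by rw [abs_mul, abs_of_nonneg (hw0 k hk)]
  _ ≤ ∑ k ∈ s, modulus f a b δ * w k := sum_le_sum fun k hk => by
    by_cases hnear : |p k - t| ≤ δ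
    · exact mul_le_mul_of_nonneg_right (abs_sub_le_modulus hf (hp k hk) ht hnear) (hw0 k hk)
    · simp [hwloc k hk (not_le.1 hnear)]
  _ = modulus f a b δ := by rw [← mul_sum, hw1, mul_one]

end Modulus

section Sigmoid

variable {m : ℝ} {σ : ℝ → ℝ} (hm : 0 ≤ m)
  (hσ1 : ∀ x : ℝ, m ≤ x → σ x = 1) (hσ0 : ∀ x : ℝ, x ≤ -m → σ x = 0)
include hm hσ1 hσ0

lemma sigmoid_bump_eq_zero {y : ℝ} (hy : 2 * m ≤ |y|) : σ (y + m) - σ (y - m) = 0 := by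
  rcases le_abs'.1 hy with h | h
  · rw [hσ0 _ (by linarith), hσ0 _ (by linarith), sub_self]
  · rw [hσ1 _ (by linarith), hσ1 _ (by linarith), sub_self]

lemma sum_range_sigmoid_bump_eq_one {a h t : ℝ} {n : ℕ} (hh : 0 < h)
    (ht : t ∈ Icc a (a + n * h)) :
    ∑ k ∈ range (n + 1),
      (σ (2 * m / h * (t - (a + k * h)) + m) - σ (2 * m / h * (t - (a + k * h)) - m)) = 1 := by
  set g : ℕ → ℝ := fun k => σ (2 * m / h * (t - (a + k * h)) + m)
  have hstep (k : ℕ) :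
      2 * m / h * (t - (a + k * h)) - m = 2 * m / h * (t - (a + ↑(k + 1) * h)) + m := by
    push_cast
    field_simp
    ring
  have hg0 : g 0 = 1 := hσ1 _ <| by
    have : 0 ≤ 2 * m / h * (t - a) := mul_nonneg (by positivity) (by linarith [ht.1])
    simpa using this
  have hgn : g (n + 1) = 0 := hσ0 _ <| by
    have : 2 * m / h * (t - (a + ↑(n + 1) * h)) ≤ 2 * m / h * (-h) :=
      mul_le_mul_of_nonneg_left (by push_cast; linarith [ht.2]) (by positivity)
    have hmh : 2 * m / h * (-h) = -(2 * m) := by field_simp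
    linarith
  simp_rw [hstep]
  rw [sum_range_sub' g, hg0, hgn, sub_zero]

end Sigmoid

lemma abs_nnOp_sub_le {m : ℝ} (hm : 0 < m) {σ : ℝ → ℝ} (hσ : Monotone σ)
    (hσ1 : ∀ x : ℝ, m ≤ x → σ x = 1) (hσ0 : ∀ x : ℝ, x ≤ -m → σ x = 0)
    {a b : ℝ} (hab : a < b) {f : ℝ → ℝ} (hf : ContinuousOn f (Icc a b))
    {n : ℕ} (hn : 0 < n) {t : ℝ} (ht : t ∈ Icc a b) :
    |nnOp m (fun y => σ (y + m) - σ (y - m)) f a b n t - f t| ≤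
      modulus f a b ((b - a) / n) := by
  set h := (b - a) / n with hh
  have hh0 : 0 < h := div_pos (sub_pos.2 hab) (Nat.cast_pos.2 hn)
  have hb : b = a + n * h := by rw [hh]; field_simp; ring
  refine abs_sum_mul_sub_le_modulus hf ht (fun k hk => ⟨?_, ?_⟩) (fun k _ => ?_)
    (sum_range_sigmoid_bump_eq_one hm.le hσ1 hσ0 hh0 (hb ▸ ht)) (fun k _ hfar => ?_)
  · nlinarith [(Nat.cast_nonneg k : (0 : ℝ) ≤ k)]
  · have : (k : ℝ) ≤ n := by exact_mod_cast Nat.lt_succ_iff.1 (mem_range.1 hk)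
    nlinarith
  · exact sub_nonneg.2 (hσ (by linarith))
  · refine sigmoid_bump_eq_zero hm.le hσ1 hσ0 ?_
    rw [abs_mul, abs_of_pos (by positivity : 0 < 2 * m / h), abs_sub_comm]
    calc 2 * m = 2 * m / h * h := by field_simp
      _ ≤ 2 * m / h * |a + k * h - t| := by gcongr

lemma Fin.exists_mem_Icc_castSucc_succ {α : Type*} [LinearOrder α] :
    ∀ {n : ℕ} (x : Fin (n + 2) → α) {s : α}, x 0 ≤ s → s ≤ x (Fin.last (n + 1)) →
      ∃ i : Fin (n + 1), s ∈ Icc (x i.castSucc) (x i.succ)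
  | 0, _, _, h0, hl => ⟨0, h0, hl⟩
  | n + 1, x, s, h0, hl => by
    by_cases hs : s ≤ x (Fin.last (n + 1)).castSucc
    · obtain ⟨i, hi⟩ := exists_mem_Icc_castSucc_succ (x ∘ Fin.castSucc) h0 hs
      exact ⟨i.castSucc, by rw [Fin.succ_castSucc]; exact hi⟩
    · exact ⟨Fin.last (n + 1), (not_le.1 hs).le, hl⟩

lemma IsCompact.le_div_one_sub_mul_of_forall_exists_le {X : Type*} [TopologicalSpace X]
    {K : Set X} (hK : IsCompact K) {g : X → ℝ} (hg : ContinuousOn g K) {κ ω : ℝ}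
    (hκ0 : 0 ≤ κ) (hκ1 : κ < 1) (h : ∀ s ∈ K, ∃ u ∈ K, g s ≤ κ * (g u + ω))
    {s : X} (hs : s ∈ K) : g s ≤ κ / (1 - κ) * ω := by
  obtain ⟨s₀, hs₀, hmax⟩ := hK.exists_isMaxOn ⟨s, hs⟩ hg
  obtain ⟨u, hu, hs₀u⟩ := h s₀ hs₀
  have hs₀ : g s₀ ≤ κ * (g s₀ + ω) :=
    hs₀u.trans (mul_le_mul_of_nonneg_left (by linarith [show g u ≤ g s₀ from hmax hu]) hκ0)
  calc g s ≤ g s₀ := hmax hs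
    _ ≤ κ / (1 - κ) * ω := by
      rw [div_mul_eq_mul_div, le_div_iff₀ (sub_pos.2 hκ1)]
      linarith

theorem stmt_10_general (m : ℝ) (hm : 0 < m) (σ : ℝ → ℝ) (hσ : Monotone σ)
    (hσ1 : ∀ x : ℝ, m ≤ x → σ x = 1) (hσ0 : ∀ x : ℝ, x ≤ -m → σ x = 0)
    (ξ : ℝ → ℝ) (hξ : ∀ x : ℝ, ξ x = σ (x + m) - σ (x - m))
    (a b : ℝ) (hab : a < b) (N : ℕ)
    (x : Fin (N + 2) → ℝ)
    (hx0 : x 0 = a) (hxN : x (Fin.last (N + 1)) = b)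
    (f : ℝ → ℝ) (hf : ContinuousOn f (Set.Icc a b))
    (L : Fin (N + 1) → ℝ → ℝ) (Linv : Fin (N + 1) → ℝ → ℝ)
    (hLinv : ∀ i, ∀ s ∈ Set.Icc (x i.castSucc) (x i.succ),
      L i (Linv i s) = s ∧ Linv i s ∈ Set.Icc a b)
    (α : Fin (N + 1) → ℝ) (hκ : (⨆ i : Fin (N + 1), |α i|) < 1)
    (fα : ℕ → ℝ → ℝ) (hfαc : ∀ n, ContinuousOn (fα n) (Set.Icc a b))
    (hself : ∀ n : ℕ, 0 < n → ∀ i : Fin (N + 1), ∀ s ∈ Set.Icc (x i.castSucc) (x i.succ),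
      fα n s = α i * fα n (Linv i s) + f s - α i * nnOp m ξ f a b n (Linv i s)) :
    (∀ n : ℕ, 0 < n → ∀ s ∈ Set.Icc a b,
      |fα n s - f s| ≤ (⨆ i : Fin (N + 1), |α i|) / (1 - ⨆ i : Fin (N + 1), |α i|) *
        modulus f a b ((b - a) / n)) ∧
    TendstoUniformlyOn fα f atTop (Set.Icc a b) := by
  obtain rfl : ξ = fun y => σ (y + m) - σ (y - m) := funext hξ
  set κ := ⨆ i : Fin (N + 1), |α i|
  have hακ (i : Fin (N + 1)) : |α i| ≤ κ :=
    le_ciSup (f := fun i => |α i|) (Finite.bddAbove_range _) i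
  have hκ0 : 0 ≤ κ := (abs_nonneg _).trans (hακ 0)
  have hbound (n : ℕ) (hn : 0 < n) (s : ℝ) (hs : s ∈ Icc a b) :
      |fα n s - f s| ≤ κ / (1 - κ) * modulus f a b ((b - a) / n) := by
    refine isCompact_Icc.le_div_one_sub_mul_of_forall_exists_le ((hfαc n).sub hf).abs hκ0 hκ
      (fun t ht => ?_) hs
    obtain ⟨i, hti⟩ := Fin.exists_mem_Icc_castSucc_succ x (hx0 ▸ ht.1) (hxN ▸ ht.2)
    set u := Linv i t
    have hu : u ∈ Icc a b := (hLinv i t hti).2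
    have hSu := abs_nnOp_sub_le hm hσ hσ1 hσ0 hab hf hn hu
    rw [abs_sub_comm] at hSu
    refine ⟨u, hu, ?_⟩
    calc |fα n t - f t|
        = |α i| *
            |(fα n u - f u) + (f u - nnOp m (fun y => σ (y + m) - σ (y - m)) f a b n u)| := by
          rw [hself n hn i t hti, ← abs_mul]; congr 1; ring
      _ ≤ κ * (|fα n u - f u| + modulus f a b ((b - a) / n)) :=
          mul_le_mul (hακ i) ((abs_add_le _ _).trans (by linarith)) (abs_nonneg _) hκ0
  refine ⟨hbound, Metric.tendstoUniformlyOn_iff.2 fun ε hε => ?_⟩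
  have hlim :
      Tendsto (fun n : ℕ => κ / (1 - κ) * modulus f a b ((b - a) / n)) atTop (𝓝 0) := by
    simpa using (tendsto_modulus_div_atTop hf (b - a)).const_mul (κ / (1 - κ))
  filter_upwards [hlim.eventually (gt_mem_nhds hε), eventually_gt_atTop 0] with n hn hn0 s hs
  rw [dist_comm, Real.dist_eq]
  exact (hbound n hn0 s hs).trans_lt hn

/-- Error bound and uniform convergence of the neural network α-fractal functions:
`‖f_n^α - f‖∞ ≤ (|α|∞/(1-|α|∞)) ω(f,(b-a)/n)` and `f_n^α → f` uniformly. -/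
theorem stmt_10 (m : ℝ) (hm : 0 < m) (σ : ℝ → ℝ) (hσ : Monotone σ)
    (hσ1 : ∀ x : ℝ, m ≤ x → σ x = 1) (hσ0 : ∀ x : ℝ, x ≤ -m → σ x = 0)
    (ξ : ℝ → ℝ) (hξ : ∀ x : ℝ, ξ x = σ (x + m) - σ (x - m))
    (a b : ℝ) (hab : a < b) (N : ℕ)
    (x : Fin (N + 2) → ℝ) (hxmono : StrictMono x)
    (hx0 : x 0 = a) (hxN : x (Fin.last (N + 1)) = b)
    (f : ℝ → ℝ) (hf : ContinuousOn f (Set.Icc a b))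
    (L : Fin (N + 1) → ℝ → ℝ) (Linv : Fin (N + 1) → ℝ → ℝ)
    (hL : ∀ i t, L i t = ((x i.succ - x i.castSucc) / (b - a)) * t +
      (b * x i.castSucc - a * x i.succ) / (b - a))
    (hLinv : ∀ i, ∀ s ∈ Set.Icc (x i.castSucc) (x i.succ),
      L i (Linv i s) = s ∧ Linv i s ∈ Set.Icc a b)
    (α : Fin (N + 1) → ℝ) (hκ : (⨆ i : Fin (N + 1), |α i|) < 1)
    (fα : ℕ → ℝ → ℝ) (hfαc : ∀ n, ContinuousOn (fα n) (Set.Icc a b))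
    (hself : ∀ n : ℕ, 0 < n → ∀ i : Fin (N + 1), ∀ s ∈ Set.Icc (x i.castSucc) (x i.succ),
      fα n s = α i * fα n (Linv i s) + f s - α i * nnOp m ξ f a b n (Linv i s)) :
    (∀ n : ℕ, 0 < n → ∀ s ∈ Set.Icc a b,
      |fα n s - f s| ≤ (⨆ i : Fin (N + 1), |α i|) / (1 - ⨆ i : Fin (N + 1), |α i|) *
        modulus f a b ((b - a) / n)) ∧
    TendstoUniformlyOn fα f atTop (Set.Icc a b) :=
  stmt_10_general m hm σ hσ hσ1 hσ0 ξ hξ a b hab N x hx0 hxN f hf L Linv hLinv α hκ fα hfαc hself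
end
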